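/- arXiv:2001.05448 — 2 statements merged into one kernel-verified Lean document; each statement's English description precedes it below -/
import Mathlib

section
/- Let s ≥ 2 and r ≥ 1, let V be a finite set partitioned into blocks V_1,…,V_s with |V_i| = m_i ≥ 1, let M = m_1 + ⋯ + m_s, and fix a distinguished element v_i ∈ V_i for each i. Then the number of r-element subsets σ ⊆ V satisfying either (i) v_i ∉ σ for all i ∈ {1,…,s} and σ is not contained in any single block V_i, or (ii) v_1 ∉ σ and v_i ∈ σ for some i ∈ {2,…,s}, equals C(M−1, r) − Σ_{i=1}^{s} C(m_i−1, r) (binomial coefficients, with C(a,b) = 0 when b > a). -/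
/-!
The admissible `σ` are exactly the `r`-subsets of `V \ {v₁}` that are not `r`-subsets of some
`Vᵢ \ {vᵢ}`: a subset avoiding every `vᵢ` and lying in no single block is of type (i), and
one containing some `vᵢ` with `i ≠ 1` cannot lie in `Vⱼ \ {vⱼ}` for any `j`. For `r ≥ 1` the
families of `r`-subsets of the different `Vᵢ \ {vᵢ}` are pairwise disjoint and all avoid `v₁`,
so the count is `C(M - 1, r) - Σᵢ C(mᵢ - 1, r)`.
-/

open scoped ContinuousMap

/-- A set `I` of vertices is `r`-independent in `G` if every connected component of the
induced subgraph `G[I]` has at most `r` vertices. -/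
def SimpleGraph.IsRIndep {V : Type*} (G : SimpleGraph V) (r : ℕ) (I : Set V) : Prop :=
  ∀ c : (G.induce I).ConnectedComponent, c.supp.ncard ≤ r

/-- The family of faces of the `r`-independence complex `Ind_r(G)`. -/
def SimpleGraph.indSets {V : Type*} (G : SimpleGraph V) (r : ℕ) : Set (Set V) :=
  {I | G.IsRIndep r I}

/-- The geometric realization of a family `K` of subsets of a finite vertex set `V`:
the set of probability weightings of `V` whose support belongs to `K`. -/
def geomRealization {V : Type*} [Fintype V] (K : Set (Set V)) : Set (V → ℝ) :=
  {f | (∀ v, 0 ≤ f v) ∧ (∑ v, f v) = 1 ∧ {v | f v ≠ 0} ∈ K}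

/-- The `n`-dimensional sphere. -/
abbrev Sph (n : ℕ) : Type := ↥(Metric.sphere (0 : EuclideanSpace ℝ (Fin (n + 1))) 1)

/-- A base point on the `n`-sphere. -/
noncomputable def sphBase (n : ℕ) : Sph n :=
  ⟨EuclideanSpace.single 0 1, by simp [EuclideanSpace.norm_single]⟩

/-- Predicate: a point of `(Fin t × Sph d) ⊕ Unit` is a base point. -/
noncomputable def isWedgeBase (t d : ℕ) (x : (Fin t × Sph d) ⊕ Unit) : Prop :=
  x = Sum.inr () ∨ ∃ i, x = Sum.inl (i, sphBase d)

/-- Relation identifying all base points. -/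
noncomputable def wedgeRel (t d : ℕ) : ((Fin t × Sph d) ⊕ Unit) → ((Fin t × Sph d) ⊕ Unit) → Prop :=
  fun x y => isWedgeBase t d x ∧ isWedgeBase t d y

/-- The wedge of `t` spheres of dimension `d` (a one-point space if `t = 0`). -/
abbrev WedgeOfSpheres (t d : ℕ) : Type := Quot (wedgeRel t d)

open Finset

namespace CriticalCells

variable {ι V : Type*} [Fintype V] [DecidableEq ι]

theorem sum_ncard_fiber_eq_card [Fintype ι] (part : V → ι) :
    ∑ i, {x | part x = i}.ncard = Fintype.card V := by
  rw [← card_univ, card_eq_sum_card_fiberwise (f := part) (t := univ) fun x _ => mem_univ _]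
  refine sum_congr rfl fun i _ => ?_
  rw [← Set.ncard_coe_finset, coe_filter]
  simp

variable [DecidableEq V]

def blockSubsets (part : V → ι) (v : ι → V) (r : ℕ) (i : ι) : Finset (Finset V) :=
  (({x | part x = i} : Finset V).erase (v i)).powersetCard r

theorem mem_blockSubsets {part : V → ι} {v : ι → V} {r : ℕ} {i : ι} {σ : Finset V} :
    σ ∈ blockSubsets part v r i ↔ σ.card = r ∧ v i ∉ σ ∧ ∀ x ∈ σ, part x = i := by
  simp only [blockSubsets, mem_powersetCard, subset_iff, mem_erase, mem_filter, mem_univ,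
    true_and]
  constructor
  · rintro ⟨hsub, hcard⟩
    exact ⟨hcard, fun hv => (hsub hv).1 rfl, fun x hx => (hsub hx).2⟩
  · rintro ⟨hcard, hv, hpart⟩
    exact ⟨fun x hx => ⟨fun h => hv (h ▸ hx), hpart x hx⟩, hcard⟩

theorem card_blockSubsets (part : V → ι) (v : ι → V) (hv : ∀ i, part (v i) = i) (r : ℕ)
    (i : ι) : (blockSubsets part v r i).card = ({x | part x = i}.ncard - 1).choose r := by
  rw [blockSubsets, card_powersetCard, card_erase_of_mem (by simp [hv i]),
    ← Set.ncard_coe_finset, coe_filter]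
  simp

theorem pairwiseDisjoint_blockSubsets (part : V → ι) (v : ι → V) {r : ℕ} (hr : 1 ≤ r)
    (s : Set ι) : s.PairwiseDisjoint (blockSubsets part v r) := by
  intro i _ j _ hij
  refine disjoint_left.2 fun σ hi hj => ?_
  rw [mem_blockSubsets] at hi hj
  obtain ⟨x, hx⟩ : σ.Nonempty := card_pos.1 (by omega)
  exact hij ((hi.2.2 x hx).symm.trans (hj.2.2 x hx))

theorem blockSubsets_subset (part : V → ι) (v : ι → V) (hv : ∀ i, part (v i) = i) (r : ℕ)
    (z i : ι) : blockSubsets part v r i ⊆ (univ.erase (v z)).powersetCard r := by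
  intro σ hσ
  rw [mem_blockSubsets] at hσ
  obtain ⟨hcard, hvi, hpart⟩ := hσ
  refine mem_powersetCard.2 ⟨fun x hx => mem_erase.2 ⟨?_, mem_univ x⟩, hcard⟩
  rintro rfl
  obtain rfl : z = i := (hv z).symm.trans (hpart _ hx)
  exact hvi hx

variable [Fintype ι]

theorem criticalCells_eq_sdiff (part : V → ι) (v : ι → V) (hv : ∀ i, part (v i) = i)
    (r : ℕ) (z : ι) :
    {σ : Finset V | σ.card = r ∧
        (((∀ i, v i ∉ σ) ∧ ¬∃ i, ∀ x ∈ σ, part x = i) ∨ (v z ∉ σ ∧ ∃ i, i ≠ z ∧ v i ∈ σ))} =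
      ↑((univ.erase (v z)).powersetCard r \ univ.biUnion (blockSubsets part v r)) := by
  ext σ
  simp only [Set.mem_ofPred_eq, coe_sdiff, Set.mem_sdiff, mem_coe, mem_powersetCard,
    subset_erase, subset_univ, mem_biUnion, mem_univ, true_and, mem_blockSubsets, not_exists]
  constructor
  · rintro ⟨hcard, ⟨havoid, hspread⟩ | ⟨hvz, i, -, hvi⟩⟩
    · exact ⟨⟨havoid z, hcard⟩, fun i hi => hspread i hi.2.2⟩
    · refine ⟨⟨hvz, hcard⟩, fun j hj => ?_⟩
      obtain rfl : i = j := (hv i).symm.trans (hj.2.2 _ hvi)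
      exact hj.2.1 hvi
  · rintro ⟨⟨hvz, hcard⟩, hnot⟩
    refine ⟨hcard, ?_⟩
    by_cases hex : ∃ i, i ≠ z ∧ v i ∈ σ
    · exact Or.inr ⟨hvz, hex⟩
    · have havoid : ∀ i, v i ∉ σ := fun i hi =>
        hex ⟨i, fun hiz => hvz (hiz ▸ hi), hi⟩
      exact Or.inl ⟨havoid, fun i hi => hnot i ⟨hcard, havoid i, hi⟩⟩

end CriticalCells

open CriticalCells in
/-- the count of the critical cells in the matching for the complete
`s`-partite graph: the number of `r`-element subsets `σ` of a set `V` partitioned into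
blocks `V_1, …, V_s` of sizes `m_1, …, m_s` (with distinguished elements `v_i ∈ V_i`)
such that either (i) no `v_i` lies in `σ` and `σ` is not contained in a single block, or
(ii) `v_1 ∉ σ` and `v_i ∈ σ` for some `i ≥ 2`, equals
`C(M-1, r) - Σ_i C(m_i - 1, r)` where `M = Σ_i m_i`. -/
theorem criticalCellCount (s r : ℕ) (hs : 2 ≤ s) (hr : 1 ≤ r)
    {V : Type*} [Fintype V] (part : V → Fin s) (m : Fin s → ℕ)
    (hcard : ∀ i, {x | part x = i}.ncard = m i)
    (v : Fin s → V) (hv : ∀ i, part (v i) = i) :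
    {σ : Finset V | σ.card = r ∧
        (((∀ i, v i ∉ σ) ∧ ¬∃ i, ∀ x ∈ σ, part x = i) ∨
          (v ⟨0, by omega⟩ ∉ σ ∧ ∃ i, i ≠ ⟨0, by omega⟩ ∧ v i ∈ σ))}.ncard =
      ((∑ i, m i) - 1).choose r - ∑ i, (m i - 1).choose r := by
  classical
  rw [criticalCells_eq_sdiff part v hv, Set.ncard_coe_finset,
    card_sdiff_of_subset (biUnion_subset.2 fun i _ => blockSubsets_subset part v hv r _ i),
    card_biUnion (pairwiseDisjoint_blockSubsets part v hr _), card_powersetCard,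
    card_erase_of_mem (mem_univ _), card_univ, ← sum_ncard_fiber_eq_card part]
  simp only [card_blockSubsets part v hv, hcard]
end

section
/- Let d ≥ 3 and let G be a disjoint union of path graphs. If some connected component of G is a path with number of vertices ℓ satisfying either ℓ ≤ d−2, or d+1 ≤ ℓ ≤ 2d−3, then Ind_{d−2}(G) is contractible. -/
open scoped ContinuousMap

/-- The disjoint union of a family of graphs, as a graph on the sigma type. -/
def sigmaGraph {ι : Type*} {α : ι → Type*} (G : ∀ i, SimpleGraph (α i)) :
    SimpleGraph (Σ i, α i) :=
  SimpleGraph.fromRel (fun x y => ∃ h : x.1 = y.1, (G y.1).Adj (h ▸ x.2) y.2)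


open SimpleGraph

section Topo
set_option linter.unusedSectionVars false
variable {V : Type*} [Fintype V] [DecidableEq V] {K : Set (Set V)}

noncomputable def vtxPt (w : V) : V → ℝ := fun x => if x = w then 1 else 0

lemma vtxPt_supp (w : V) : {v | vtxPt w v ≠ 0} = {w} := by
  ext x
  simp only [vtxPt, Set.mem_setOf_eq, Set.mem_singleton_iff]
  by_cases h : x = w <;> simp [h]

lemma vtxPt_mem {w : V} (hw : ({w} : Set V) ∈ K) : vtxPt w ∈ geomRealization K := by
  refine ⟨fun x => by unfold vtxPt; positivity, by simp [vtxPt], ?_⟩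
  rw [vtxPt_supp]; exact hw

lemma comb_mem (down : ∀ σ ∈ K, ∀ τ ⊆ σ, τ ∈ K) {f g : V → ℝ}
    (hf0 : ∀ v, 0 ≤ f v) (hf1 : ∑ v, f v = 1)
    (hg0 : ∀ v, 0 ≤ g v) (hg1 : ∑ v, g v = 1)
    (hK : {v | f v ≠ 0} ∪ {v | g v ≠ 0} ∈ K) {t : ℝ} (ht0 : 0 ≤ t) (ht1 : t ≤ 1) :
    (fun x => (1 - t) * f x + t * g x) ∈ geomRealization K := by
  have h1t : (0:ℝ) ≤ 1 - t := by linarith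
  refine ⟨fun x => add_nonneg (mul_nonneg h1t (hf0 x)) (mul_nonneg ht0 (hg0 x)), ?_, ?_⟩
  · rw [Finset.sum_add_distrib, ← Finset.mul_sum, ← Finset.mul_sum, hf1, hg1]; ring
  · refine down _ hK _ ?_
    intro x hx
    simp only [Set.mem_setOf_eq, Set.mem_union] at hx ⊢
    by_contra h
    push_neg at h
    exact hx (by rw [h.1, h.2]; ring)

/-- The fold map at time `t`. -/
noncomputable def foldFun (v u : V) (t : ℝ) (f : V → ℝ) : V → ℝ :=
  fun x => f x + t * f v * ((if x = u then 1 else 0) - (if x = v then 1 else 0))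

lemma foldFun_apply_other {v u x : V} (hxv : x ≠ v) (hxu : x ≠ u) (t : ℝ) (f : V → ℝ) :
    foldFun v u t f x = f x := by
  simp [foldFun, hxv, hxu]

lemma foldFun_apply_u {v u : V} (hvu : v ≠ u) (t : ℝ) (f : V → ℝ) :
    foldFun v u t f u = f u + t * f v := by
  simp [foldFun, Ne.symm hvu]

lemma foldFun_apply_vv {v u : V} (hvu : v ≠ u) (t : ℝ) (f : V → ℝ) :
    foldFun v u t f v = (1 - t) * f v := by
  simp only [foldFun, if_neg hvu]
  simp only [if_pos trivial, eq_self_iff_true, if_true]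
  ring

lemma foldFun_mem (down : ∀ σ ∈ K, ∀ τ ⊆ σ, τ ∈ K) {v u : V} (hvu : v ≠ u)
    (h1 : ∀ σ ∈ K, v ∈ σ → σ ∪ {u} ∈ K) {f : V → ℝ} (hf : f ∈ geomRealization K)
    {t : ℝ} (ht0 : 0 ≤ t) (ht1 : t ≤ 1) : foldFun v u t f ∈ geomRealization K := by
  obtain ⟨hf0, hf1, hfK⟩ := hf
  refine ⟨?_, ?_, ?_⟩
  · intro x
    rcases eq_or_ne x v with hxv | hxv
    · rw [hxv, foldFun_apply_vv hvu]
      exact mul_nonneg (by linarith) (hf0 v)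
    rcases eq_or_ne x u with hxu | hxu
    · rw [hxu, foldFun_apply_u hvu]
      exact add_nonneg (hf0 u) (mul_nonneg ht0 (hf0 v))
    · rw [foldFun_apply_other hxv hxu]
      exact hf0 x
  · unfold foldFun
    rw [Finset.sum_add_distrib, ← Finset.mul_sum, Finset.sum_sub_distrib,
      Finset.sum_ite_eq' Finset.univ u (fun _ => (1:ℝ)),
      Finset.sum_ite_eq' Finset.univ v (fun _ => (1:ℝ)), hf1]
    simp
  · rcases eq_or_ne (f v) 0 with hfv | hfv
    · have : foldFun v u t f = f := by
        funext x; simp [foldFun, hfv]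
      rw [this]; exact hfK
    · have hKu : {x | f x ≠ 0} ∪ {u} ∈ K := h1 _ hfK hfv
      refine down _ hKu _ ?_
      intro x hx
      simp only [Set.mem_setOf_eq, Set.mem_union, Set.mem_singleton_iff] at hx ⊢
      rcases eq_or_ne x u with hxu | hxu
      · exact Or.inr hxu
      rcases eq_or_ne x v with hxv | hxv
      · left
        rw [hxv] at hx ⊢
        rw [foldFun_apply_vv hvu] at hx
        intro h0
        exact hx (by rw [h0]; ring)
      · left
        rwa [foldFun_apply_other hxv hxu] at hx

lemma foldFun_apply_v {v u : V} (hvu : v ≠ u) (f : V → ℝ) :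
    foldFun v u 1 f v = 0 := by
  rw [foldFun_apply_vv hvu]; ring

theorem cone_contractible (down : ∀ σ ∈ K, ∀ τ ⊆ σ, τ ∈ K) (hne : ∅ ∈ K) (w : V)
    (hw : ∀ σ ∈ K, σ ∪ {w} ∈ K) :
    ContractibleSpace ↥(geomRealization K) := by
  rw [contractible_iff_id_nullhomotopic]
  have hwK : ({w} : Set V) ∈ K := by simpa using hw ∅ hne
  refine ⟨⟨vtxPt w, vtxPt_mem hwK⟩, ?_⟩
  refine ⟨⟨⟨fun p => ⟨fun x => (1 - (p.1 : ℝ)) * (p.2 : V → ℝ) x + (p.1 : ℝ) * vtxPt w x, ?_⟩, ?_⟩, ?_, ?_⟩⟩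
  · obtain ⟨t, f⟩ := p
    refine comb_mem down f.2.1 f.2.2.1 (vtxPt_mem hwK).1 (vtxPt_mem hwK).2.1 ?_ t.2.1 t.2.2
    rw [vtxPt_supp]
    exact hw _ f.2.2.2
  · apply Continuous.subtype_mk
    apply continuous_pi
    intro x
    apply Continuous.add
    · exact (continuous_const.sub (continuous_induced_dom.comp continuous_fst)).mul
        ((continuous_apply x).comp (continuous_subtype_val.comp continuous_snd))
    · exact ((continuous_induced_dom.comp continuous_fst)).mul continuous_const
  · intro x; ext v; simp
  · intro x; ext v; simp

theorem foldcone_contractible (down : ∀ σ ∈ K, ∀ τ ⊆ σ, τ ∈ K) (hne : ∅ ∈ K)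
    (v u w : V) (hvu : v ≠ u)
    (h1 : ∀ σ ∈ K, v ∈ σ → σ ∪ {u} ∈ K)
    (h2 : ∀ σ ∈ K, v ∉ σ → σ ∪ {w} ∈ K) :
    ContractibleSpace ↥(geomRealization K) := by
  rw [contractible_iff_id_nullhomotopic]
  have hwK : ({w} : Set V) ∈ K := by simpa using h2 ∅ hne (by simp)
  refine ⟨⟨vtxPt w, vtxPt_mem hwK⟩, ?_⟩
  set X := ↥(geomRealization K)
  have Fmem : ∀ f : X, foldFun v u 1 (f : V → ℝ) ∈ geomRealization K :=
    fun f => foldFun_mem down hvu h1 f.2 zero_le_one le_rfl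
  set F : C(X, X) := ⟨fun f => ⟨foldFun v u 1 (f : V → ℝ), Fmem f⟩, by
    apply Continuous.subtype_mk
    apply continuous_pi
    intro x
    apply Continuous.add
    · exact (continuous_apply x).comp continuous_subtype_val
    · exact ((continuous_const.mul ((continuous_apply v).comp continuous_subtype_val)).mul
        continuous_const)⟩ with hF
  have H1 : (ContinuousMap.id X).Homotopy F := by
    refine ⟨⟨fun p => ⟨foldFun v u (p.1 : ℝ) (p.2 : V → ℝ),
        foldFun_mem down hvu h1 p.2.2 p.1.2.1 p.1.2.2⟩, ?_⟩, ?_, ?_⟩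
    · apply Continuous.subtype_mk
      apply continuous_pi
      intro x
      apply Continuous.add
      · exact (continuous_apply x).comp (continuous_subtype_val.comp continuous_snd)
      · exact ((continuous_induced_dom.comp continuous_fst).mul
          ((continuous_apply v).comp (continuous_subtype_val.comp continuous_snd))).mul
          continuous_const
    · intro f; ext x; simp [foldFun]
    · intro f; ext x; rfl
  have H2 : F.Homotopy (ContinuousMap.const X ⟨vtxPt w, vtxPt_mem hwK⟩) := by
    refine ⟨⟨fun p => ⟨fun x => (1 - (p.1 : ℝ)) * foldFun v u 1 (p.2 : V → ℝ) x
        + (p.1 : ℝ) * vtxPt w x, ?_⟩, ?_⟩, ?_, ?_⟩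
    · obtain ⟨hg0, hg1, hgK⟩ := Fmem p.2
      refine comb_mem down hg0 hg1 (vtxPt_mem hwK).1 (vtxPt_mem hwK).2.1 ?_ p.1.2.1 p.1.2.2
      rw [vtxPt_supp]
      refine h2 _ hgK ?_
      simp only [Set.mem_setOf_eq, not_not]
      exact foldFun_apply_v hvu _
    · apply Continuous.subtype_mk
      apply continuous_pi
      intro x
      apply Continuous.add
      · refine (continuous_const.sub (continuous_induced_dom.comp continuous_fst)).mul ?_
        apply Continuous.add
        · exact (continuous_apply x).comp (continuous_subtype_val.comp continuous_snd)
        · exact ((continuous_const.mul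
            ((continuous_apply v).comp (continuous_subtype_val.comp continuous_snd))).mul
            continuous_const)
      · exact (continuous_induced_dom.comp continuous_fst).mul continuous_const
    · intro f
      ext x
      show (1 - (0:ℝ)) * _ + (0:ℝ) * _ = _
      rw [hF]
      simp
    · intro f
      ext x
      show (1 - (1:ℝ)) * _ + (1:ℝ) * _ = _
      simp [ContinuousMap.const_apply]
  exact ⟨H1.trans H2⟩
end Topo

lemma sigmaGraph_adj_fst {ι : Type*} {α : ι → Type*} {G : ∀ i, SimpleGraph (α i)}
    {x y : Σ i, α i} (h : (sigmaGraph G).Adj x y) : x.1 = y.1 := by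
  rw [sigmaGraph, fromRel_adj] at h
  rcases h.2 with ⟨h', _⟩ | ⟨h', _⟩
  · exact h'
  · exact h'.symm

lemma sigmaGraph_adj_mk {ι : Type*} {α : ι → Type*} {G : ∀ i, SimpleGraph (α i)}
    {i : ι} {a b : α i} : (sigmaGraph G).Adj ⟨i, a⟩ ⟨i, b⟩ ↔ (G i).Adj a b := by
  rw [sigmaGraph, fromRel_adj]
  constructor
  · rintro ⟨hne, ⟨h', hadj⟩ | ⟨h', hadj⟩⟩
    · exact hadj
    · exact hadj.symm
  · intro h
    exact ⟨fun hh => (G i).irrefl (by cases (sigma_mk_injective hh); exact h),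
      Or.inl ⟨rfl, h⟩⟩

section GenGraph2
variable {V : Type*} {G : SimpleGraph V}
lemma reachable_mem_closed {I : Set V} {a : V} (ha : a ∈ I) (T : Set V) (haT : a ∈ T)
    (hcl : ∀ x y : V, x ∈ T → y ∈ I → G.Adj x y → y ∈ T) :
    ∀ y : ↥I, (G.induce I).Reachable ⟨a, ha⟩ y → (y : V) ∈ T := by
  have key : ∀ (x y : ↥I), (G.induce I).Walk x y → (x : V) ∈ T → (y : V) ∈ T := by
    intro x y p
    induction p with
    | nil => exact id
    | @cons u v w h q ih =>
      intro hu
      exact ih (hcl u v hu v.2 h)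
  intro y hy
  obtain ⟨p⟩ := hy
  exact key _ _ p haT

lemma reachable_run {I : Set V} {f : ℕ → V} (s k : ℕ) (hsk : s ≤ k)
    (hadj : ∀ t, s ≤ t → t + 1 ≤ k → G.Adj (f t) (f (t + 1)))
    (hmem : ∀ t, s ≤ t → t ≤ k → f t ∈ I)
    (h1 : f s ∈ I) (h2 : f k ∈ I) :
    (G.induce I).Reachable ⟨f s, h1⟩ ⟨f k, h2⟩ := by
  induction k, hsk using Nat.le_induction with
  | base => exact Reachable.refl _
  | succ n hn ih =>
    have hr := ih (fun t ht ht2 => hadj t ht (ht2.trans (Nat.le_succ n)))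
      (fun t ht ht2 => hmem t ht (ht2.trans (Nat.le_succ n)))
      (hmem n hn (Nat.le_succ n))
    exact hr.trans (Adj.reachable
      (show (G.induce I).Adj ⟨f n, hmem n hn (Nat.le_succ n)⟩ ⟨f (n+1), h2⟩ from
        hadj n hn le_rfl))



end GenGraph2

lemma ncard_sigma_interval {m : ℕ} (c : Fin m → ℕ) (i : Fin m) (s t : ℕ) (h : t ≤ c i) :
    {x : Σ j, Fin (c j) | x.1 = i ∧ s ≤ x.2.val ∧ x.2.val < t}.ncard = t - s := by
  have heq : {x : Σ j, Fin (c j) | x.1 = i ∧ s ≤ x.2.val ∧ x.2.val < t}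
      = Sigma.mk i '' {a : Fin (c i) | s ≤ a.val ∧ a.val < t} := by
    ext x
    constructor
    · rintro ⟨h1, h2, h3⟩
      obtain ⟨j, b⟩ := x
      cases h1
      exact ⟨b, ⟨h2, h3⟩, rfl⟩
    · rintro ⟨b, ⟨h2, h3⟩, rfl⟩
      exact ⟨rfl, h2, h3⟩
  rw [heq, Set.ncard_image_of_injective _ sigma_mk_injective]
  have heq2 : Fin.val '' {a : Fin (c i) | s ≤ a.val ∧ a.val < t} = Set.Ico s t := by
    ext k
    constructor
    · rintro ⟨b, ⟨h2, h3⟩, rfl⟩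
      exact ⟨h2, h3⟩
    · rintro ⟨h2, h3⟩
      exact ⟨⟨k, lt_of_lt_of_le h3 h⟩, ⟨h2, h3⟩, rfl⟩
  rw [← Set.ncard_image_of_injective _ Fin.val_injective, heq2, ← Finset.coe_Ico,
    Set.ncard_coe_finset, Nat.card_Ico]


section GenGraph
variable {V : Type*} [Fintype V] {G : SimpleGraph V} {r : ℕ}

lemma ncard_supp_le {I : Set V} (c : (G.induce I).ConnectedComponent) (S : Set V)
    (h : ∀ y : I, connectedComponentMk (G.induce I) y = c → (y : V) ∈ S)
    (hS : S.ncard ≤ r) : c.supp.ncard ≤ r := by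
  have hsub : Subtype.val '' c.supp ⊆ S := by
    rintro _ ⟨y, hy, rfl⟩
    exact h y hy
  calc c.supp.ncard = (Subtype.val '' c.supp).ncard :=
        (Set.ncard_image_of_injective _ Subtype.val_injective).symm
    _ ≤ S.ncard := Set.ncard_le_ncard hsub (Set.toFinite S)
    _ ≤ r := hS

lemma IsRIndep.mono {I J : Set V} (hIJ : I ⊆ J) (hJ : G.IsRIndep r J) : G.IsRIndep r I := by
  intro c
  obtain ⟨x, hx⟩ := c.exists_rep
  set φ : G.induce I →g G.induce J := ⟨Set.inclusion hIJ, fun {a b} hadj => hadj⟩ with hφ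
  refine ncard_supp_le c
    (Subtype.val '' (connectedComponentMk (G.induce J) (φ x)).supp) ?_ ?_
  · intro y hy
    have hr : (G.induce I).Reachable y x := by
      rw [← hx] at hy
      exact ConnectedComponent.exact hy
    refine ⟨φ y, ?_, rfl⟩
    exact ConnectedComponent.sound (hr.map φ)
  · rw [Set.ncard_image_of_injective _ Subtype.val_injective]
    exact hJ _

lemma reachable_of_walk_subset {I J : Set V} {x y : ↥J}
    (p : (G.induce J).Walk x y) (hp : ∀ z ∈ p.support, (z : V) ∈ I) :
    (G.induce I).Reachable ⟨x, hp x p.start_mem_support⟩ ⟨y, hp y p.end_mem_support⟩ := by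
  induction p with
  | nil => exact Reachable.refl _
  | @cons a b yy h q ih =>
    have hb : (b : V) ∈ I := hp b (by simp [Walk.support_cons])
    have ha : (a : V) ∈ I := hp a (by simp [Walk.support_cons])
    refine Reachable.trans (Adj.reachable (show (G.induce I).Adj ⟨a, ha⟩ ⟨b, hb⟩ from h)) ?_
    exact ih (fun z hz => hp z (by simp [Walk.support_cons, hz]))

lemma isRIndep_insert (hI : G.IsRIndep r I) (a : V) (S : Set V) (hS : S.ncard ≤ r)
    (hreach : ∀ y : ↥(insert a I),
      (G.induce (insert a I)).Reachable ⟨a, Set.mem_insert a I⟩ y → (y : V) ∈ S) :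
    G.IsRIndep r (insert a I) := by
  classical
  intro cc
  by_cases hc : connectedComponentMk (G.induce (insert a I)) ⟨a, Set.mem_insert a I⟩ = cc
  · refine ncard_supp_le cc S ?_ hS
    intro y hy
    refine hreach y ?_
    rw [← hc] at hy
    exact (ConnectedComponent.exact hy).symm
  · obtain ⟨x, hx⟩ := cc.exists_rep
    have hxa : (x : V) ≠ a := by
      intro h
      exact hc (by rw [← hx]; congr 1; exact Subtype.ext h.symm)
    have hxI : (x : V) ∈ I := x.2.resolve_left hxa
    refine ncard_supp_le cc
      (Subtype.val '' (connectedComponentMk (G.induce I) ⟨x, hxI⟩).supp) ?_ ?_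
    · intro y hy
      have hr : (G.induce (insert a I)).Reachable y x := by
        rw [← hx] at hy
        exact ConnectedComponent.exact hy
      obtain ⟨p⟩ := hr
      have hsup : ∀ z ∈ p.support, (z : V) ∈ I := by
        intro z hz
        rcases z.2 with hz' | hz'
        · exfalso
          have hza : z = ⟨a, Set.mem_insert a I⟩ := Subtype.ext hz'
          have : (G.induce (insert a I)).Reachable y z := ⟨p.takeUntil z hz⟩
          rw [hza] at this
          exact hc ((ConnectedComponent.sound this.symm).trans hy)
        · exact hz'
      have hr2 := reachable_of_walk_subset (I := I) p hsup
      exact ⟨⟨(y : V), hsup y p.start_mem_support⟩, ConnectedComponent.sound hr2, rfl⟩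
    · rw [Set.ncard_image_of_injective _ Subtype.val_injective]
      exact hI _
end GenGraph

section Paths
variable {m : ℕ} {c : Fin m → ℕ} {r : ℕ}

local notation "PG" => sigmaGraph (fun i => SimpleGraph.pathGraph (c i))

lemma pg_adj_facts {x y : Σ j, Fin (c j)} (h : (PG).Adj x y) :
    x.1 = y.1 ∧ (x.2.val + 1 = y.2.val ∨ y.2.val + 1 = x.2.val) := by
  obtain ⟨j, a⟩ := x
  obtain ⟨j', b⟩ := y
  obtain rfl : j = j' := sigmaGraph_adj_fst h
  exact ⟨rfl, pathGraph_adj.mp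
    ((sigmaGraph_adj_mk (G := fun i => SimpleGraph.pathGraph (c i))).mp h)⟩

lemma sigma_eq_of {y : Σ j, Fin (c j)} {i : Fin m} {k : Fin (c i)}
    (h1 : y.1 = i) (h2 : y.2.val = k.val) : y = ⟨i, k⟩ := by
  obtain ⟨j, b⟩ := y
  cases h1
  exact congrArg (Sigma.mk j) (Fin.ext h2)

/-- Case 1: insert a vertex of a small fiber. -/
lemma insert_small {I : Set (Σ j, Fin (c j))} (hI : (PG).IsRIndep r I) {i : Fin m}
    (hle : c i ≤ r) (a0 : Fin (c i)) : (PG).IsRIndep r (insert ⟨i, a0⟩ I) := by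
  refine isRIndep_insert hI _ {x : Σ j, Fin (c j) | x.1 = i ∧ 0 ≤ x.2.val ∧ x.2.val < c i} ?_ ?_
  · rw [ncard_sigma_interval c i 0 (c i) le_rfl]
    omega
  · refine reachable_mem_closed _ _ ⟨rfl, Nat.zero_le _, a0.isLt⟩ ?_
    intro x y hx hy hadj
    obtain ⟨hfst, -⟩ := pg_adj_facts hadj
    refine ⟨hfst ▸ hx.1, Nat.zero_le _, ?_⟩
    have h2 := y.2.isLt
    have h3 : c y.1 = c i := congrArg c (hfst ▸ hx.1)
    omega

/-- Case 2, the cone part: insert the first vertex when `v` is absent. -/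
lemma insert_zero {I : Set (Σ j, Fin (c j))} (hI : (PG).IsRIndep r I) {i : Fin m}
    (h3 : r + 3 ≤ c i) (h21 : c i ≤ 2 * r + 1)
    (hv : (⟨i, ⟨c i - r - 2, by omega⟩⟩ : Σ j, Fin (c j)) ∉ I) :
    (PG).IsRIndep r (insert ⟨i, ⟨0, by omega⟩⟩ I) := by
  refine isRIndep_insert hI _
    {x : Σ j, Fin (c j) | x.1 = i ∧ 0 ≤ x.2.val ∧ x.2.val < c i - r - 2} ?_ ?_
  · rw [ncard_sigma_interval c i 0 (c i - r - 2) (by omega)]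
    omega
  · refine reachable_mem_closed _ _ ⟨rfl, le_rfl, by simp; omega⟩ ?_
    intro x y hx hy hadj
    obtain ⟨hfst, hval⟩ := pg_adj_facts hadj
    have h1 : y.1 = i := hfst ▸ hx.1
    refine ⟨h1, Nat.zero_le _, ?_⟩
    obtain ⟨-, -, hxlt⟩ := hx
    by_contra hge
    have hys : y.2.val = c i - r - 2 := by omega
    have hyv : y = (⟨i, ⟨c i - r - 2, by omega⟩⟩ : Σ j, Fin (c j)) := sigma_eq_of h1 hys
    rcases hy with hy | hy
    · rw [hyv] at hy
      have := congrArg (fun z : Σ j, Fin (c j) => z.2.val) hy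
      simp at this
      omega
    · rw [hyv] at hy
      exact hv hy

/-- Case 2, the fold part: insert the last vertex when `v` is present. -/
lemma insert_last {I : Set (Σ j, Fin (c j))} (hI : (PG).IsRIndep r I) {i : Fin m}
    (h3 : r + 3 ≤ c i) (h21 : c i ≤ 2 * r + 1)
    (hv : (⟨i, ⟨c i - r - 2, by omega⟩⟩ : Σ j, Fin (c j)) ∈ I) :
    (PG).IsRIndep r (insert ⟨i, ⟨c i - 1, by omega⟩⟩ I) := by
  by_cases hgap : ∃ g, c i - r - 2 < g ∧ g < c i - 1 ∧
      (⟨i, ⟨min g (c i - 1), by omega⟩⟩ : Σ j, Fin (c j)) ∉ I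
  · obtain ⟨g, hg1, hg2, hgI⟩ := hgap
    refine isRIndep_insert hI _
      {x : Σ j, Fin (c j) | x.1 = i ∧ g + 1 ≤ x.2.val ∧ x.2.val < c i} ?_ ?_
    · rw [ncard_sigma_interval c i (g+1) (c i) le_rfl]
      omega
    · refine reachable_mem_closed _ _ ⟨rfl, by simp; omega, by simp; omega⟩ ?_
      intro x y hx hy hadj
      obtain ⟨hfst, hval⟩ := pg_adj_facts hadj
      have h1 : y.1 = i := hfst ▸ hx.1
      obtain ⟨-, hxg, hxl⟩ := hx
      refine ⟨h1, ?_, by rw [← h1]; exact y.2.isLt⟩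
      rcases hval with hc1 | hc2
      · omega
      · by_contra hge
        have hys : y.2.val = g := by omega
        have hyv : y = (⟨i, ⟨min g (c i - 1), by omega⟩⟩ : Σ j, Fin (c j)) :=
          sigma_eq_of h1 (by simp; omega)
        rcases hy with hy | hy
        · rw [hyv] at hy
          have := congrArg (fun z : Σ j, Fin (c j) => z.2.val) hy
          simp at this
          omega
        · rw [hyv] at hy
          exact hgI hy
  · exfalso
    push_neg at hgap
    set f : ℕ → Σ j, Fin (c j) := fun k => ⟨i, ⟨min k (c i - 1), by omega⟩⟩ with hf
    have hky : ∀ k (hk : k < c i), f k = ⟨i, ⟨k, hk⟩⟩ := by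
      intro k hk
      rw [hf]
      exact sigma_eq_of rfl (by show min k (c i - 1) = k; omega)
    have hmemI : ∀ t, c i - r - 2 ≤ t → t < c i - 1 → f t ∈ I := by
      intro t ht1 ht2
      rcases eq_or_lt_of_le ht1 with h | h
      · rw [← h, hky (c i - r - 2) (by omega)]
        exact hv
      · exact hgap t h ht2
    have hvf : f (c i - r - 2) ∈ I := hmemI _ le_rfl (by omega)
    set cc := connectedComponentMk ((PG).induce I) ⟨f (c i - r - 2), hvf⟩ with hcc
    have hsub : {x : Σ j, Fin (c j) | x.1 = i ∧ c i - r - 2 ≤ x.2.val ∧ x.2.val < c i - 1}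
        ⊆ Subtype.val '' cc.supp := by
      rintro x ⟨h1, hb1, hb2⟩
      have hxf : x = f x.2.val := by
        rw [hky x.2.val (by have := x.2.isLt; have := congrArg c h1; omega)]
        exact sigma_eq_of h1 rfl
      have hadjf : ∀ t, c i - r - 2 ≤ t → t + 1 ≤ x.2.val → (PG).Adj (f t) (f (t+1)) := by
        intro t ht1 ht2
        rw [hky t (by omega), hky (t+1) (by omega)]
        refine (sigmaGraph_adj_mk (G := fun i => SimpleGraph.pathGraph (c i))).mpr ?_
        exact SimpleGraph.pathGraph_adj.mpr (Or.inl rfl)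
      have hmem2 : ∀ t, c i - r - 2 ≤ t → t ≤ x.2.val → f t ∈ I :=
        fun t ht1 ht2 => hmemI t ht1 (by omega)
      have hre := reachable_run (G := PG) (I := I) (f := f) (c i - r - 2) x.2.val hb1
        hadjf hmem2 hvf (hmem2 x.2.val hb1 le_rfl)
      exact ⟨⟨f x.2.val, hmem2 x.2.val hb1 le_rfl⟩, ConnectedComponent.sound hre.symm, hxf.symm⟩
    have hcard : (c i - 1) - (c i - r - 2) ≤ r := by
      calc (c i - 1) - (c i - r - 2)
          = {x : Σ j, Fin (c j) | x.1 = i ∧ c i - r - 2 ≤ x.2.val ∧ x.2.val < c i - 1}.ncard := by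
            rw [ncard_sigma_interval c i _ _ (by omega)]
        _ ≤ (Subtype.val '' cc.supp).ncard := Set.ncard_le_ncard hsub (Set.toFinite _)
        _ = cc.supp.ncard := Set.ncard_image_of_injective _ Subtype.val_injective
        _ ≤ r := hI cc
    omega
end Paths

/-- if `G` is a disjoint union of paths and some component is a path on
`ℓ` vertices with `ℓ ≤ d-2`, or with `d+1 ≤ ℓ ≤ 2d-3`, then `Ind_{d-2}(G)` is
contractible. -/
theorem rIndep_disjointPaths_contractible (d m : ℕ) (hd : 3 ≤ d)
    (c : Fin m → ℕ) (hc : ∀ i, 1 ≤ c i)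
    (hbad : ∃ i, c i ≤ d - 2 ∨ (d + 1 ≤ c i ∧ c i ≤ 2 * d - 3)) :
    ContractibleSpace
      ↥(geomRealization
          ((sigmaGraph (fun i => SimpleGraph.pathGraph (c i))).indSets (d - 2))) := by
  classical
  set r := d - 2 with hr
  set K := (sigmaGraph (fun i => SimpleGraph.pathGraph (c i))).indSets r with hK
  have down : ∀ σ ∈ K, ∀ τ ⊆ σ, τ ∈ K := fun σ hσ τ hτ => IsRIndep.mono hτ hσ
  have hne : ∅ ∈ K := by
    intro cc
    obtain ⟨x, -⟩ := cc.exists_rep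
    exact absurd x.2 (Set.notMem_empty _)
  obtain ⟨i, hi | ⟨hi1, hi2⟩⟩ := hbad
  · -- small component: cone
    refine cone_contractible down hne ⟨i, ⟨0, hc i⟩⟩ ?_
    intro σ hσ
    rw [Set.union_singleton]
    exact insert_small hσ hi _
  · -- fold then cone
    have h3 : r + 3 ≤ c i := by omega
    have h21 : c i ≤ 2 * r + 1 := by omega
    refine foldcone_contractible down hne
      ⟨i, ⟨c i - r - 2, by omega⟩⟩ ⟨i, ⟨c i - 1, by omega⟩⟩ ⟨i, ⟨0, by omega⟩⟩ ?_ ?_ ?_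
    · intro h
      have := congrArg (fun z : Σ j, Fin (c j) => z.2.val) h
      simp at this
      omega
    · intro σ hσ hv
      rw [Set.union_singleton]
      exact insert_last hσ h3 h21 hv
    · intro σ hσ hv
      rw [Set.union_singleton]
      exact insert_zero hσ h3 h21 hv
end
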